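/- Fifth mixed pentagon relation: S'₁₂ · S̃₁₃ · S''₂₃ = S''₂₃ · S'₁₂ as matrices on V × V × V, where S̃ := Sᵀ, S' := (S⁻¹)^{t₁}, and S'' := (S^{t₂})⁻¹. -/
import Mathlib


open Matrix BigOperators

/-- Matrix on `V × V × V` acting as `T` on the first and second factors. -/
def lift12 {k V : Type*} [Semiring k] [DecidableEq V]
    (T : Matrix (V × V) (V × V) k) : Matrix (V × V × V) (V × V × V) k :=
  Matrix.of fun p q =>
    T (p.1, p.2.1) (q.1, q.2.1) * (if p.2.2 = q.2.2 then 1 else 0)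

/-- Matrix on `V × V × V` acting as `T` on the first and third factors. -/
def lift13 {k V : Type*} [Semiring k] [DecidableEq V]
    (T : Matrix (V × V) (V × V) k) : Matrix (V × V × V) (V × V × V) k :=
  Matrix.of fun p q =>
    T (p.1, p.2.2) (q.1, q.2.2) * (if p.2.1 = q.2.1 then 1 else 0)

/-- Matrix on `V × V × V` acting as `T` on the second and third factors. -/
def lift23 {k V : Type*} [Semiring k] [DecidableEq V]
    (T : Matrix (V × V) (V × V) k) : Matrix (V × V × V) (V × V × V) k :=
  Matrix.of fun p q =>
    T (p.2.1, p.2.2) (q.2.1, q.2.2) * (if p.1 = q.1 then 1 else 0)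

/-- Partial transposition in the first factor: `T^{t₁}_{(a,b),(c,d)} = T_{(c,b),(a,d)}`. -/
def pt1 {k V : Type*} (T : Matrix (V × V) (V × V) k) : Matrix (V × V) (V × V) k :=
  Matrix.of fun p q => T (q.1, p.2) (p.1, q.2)

/-- Partial transposition in the second factor: `T^{t₂}_{(a,b),(c,d)} = T_{(a,d),(c,b)}`. -/
def pt2 {k V : Type*} (T : Matrix (V × V) (V × V) k) : Matrix (V × V) (V × V) k :=
  Matrix.of fun p q => T (p.1, q.2) (q.1, p.2)

set_option linter.unusedSectionVars false

section Aux
variable {k V : Type*} [Field k] [Fintype V] [DecidableEq V]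

/-- transpose on leg 1 -/
def th1 (M : Matrix (V × V × V) (V × V × V) k) : Matrix (V × V × V) (V × V × V) k :=
  Matrix.of fun p q => M (q.1, p.2.1, p.2.2) (p.1, q.2.1, q.2.2)

/-- transpose on leg 3 -/
def th3 (M : Matrix (V × V × V) (V × V × V) k) : Matrix (V × V × V) (V × V × V) k :=
  Matrix.of fun p q => M (p.1, p.2.1, q.2.2) (q.1, q.2.1, p.2.2)

lemma th1_th1 (M : Matrix (V × V × V) (V × V × V) k) : th1 (th1 M) = M := rfl
lemma th3_th3 (M : Matrix (V × V × V) (V × V × V) k) : th3 (th3 M) = M := rfl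

lemma th1_lift12 (T : Matrix (V × V) (V × V) k) : th1 (lift12 T) = lift12 (pt1 T) := rfl
lemma th1_lift13 (T : Matrix (V × V) (V × V) k) : th1 (lift13 T) = lift13 (pt1 T) := rfl
lemma th3_lift23 (T : Matrix (V × V) (V × V) k) : th3 (lift23 T) = lift23 (pt2 T) := rfl
lemma th3_lift13 (T : Matrix (V × V) (V × V) k) : th3 (lift13 T) = lift13 (pt2 T) := rfl
lemma pt1_pt2 (T : Matrix (V × V) (V × V) k) : pt1 (pt2 T) = Tᵀ := rfl
lemma pt2_pt2 (T : Matrix (V × V) (V × V) k) : pt2 (pt2 T) = T := rfl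

lemma lift12_mul (A B : Matrix (V × V) (V × V) k) :
    lift12 A * lift12 B = lift12 (A * B) := by
  ext ⟨a, b, c⟩ ⟨d, e, f⟩
  simp [lift12, Matrix.mul_apply, Fintype.sum_prod_type, mul_ite, ite_mul,
    Finset.mul_sum, Finset.sum_ite_eq, Finset.sum_ite_eq']

lemma lift12_one : lift12 (1 : Matrix (V × V) (V × V) k) = 1 := by
  ext ⟨a, b, c⟩ ⟨d, e, f⟩
  simp [lift12, Matrix.one_apply, Prod.ext_iff, ite_and]
  aesop

lemma lift23_mul (A B : Matrix (V × V) (V × V) k) :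
    lift23 A * lift23 B = lift23 (A * B) := by
  ext ⟨a, b, c⟩ ⟨d, e, f⟩
  simp [lift23, Matrix.mul_apply, Fintype.sum_prod_type, mul_ite, ite_mul,
    Finset.mul_sum, Finset.sum_ite_eq, Finset.sum_ite_eq']

lemma lift23_one : lift23 (1 : Matrix (V × V) (V × V) k) = 1 := by
  ext ⟨a, b, c⟩ ⟨d, e, f⟩
  simp [lift23, Matrix.one_apply, Prod.ext_iff, ite_and]

lemma th1_mul_left (A : Matrix (V × V) (V × V) k) (N : Matrix (V × V × V) (V × V × V) k) :
    th1 (lift23 A * N) = lift23 A * th1 N := by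
  ext ⟨a, b, c⟩ ⟨d, e, f⟩
  simp [th1, lift23, Matrix.mul_apply, Fintype.sum_prod_type, mul_ite, ite_mul,
    Finset.sum_ite_eq, Finset.sum_ite_eq']

lemma th1_mul_right (A : Matrix (V × V) (V × V) k) (N : Matrix (V × V × V) (V × V × V) k) :
    th1 (N * lift23 A) = th1 N * lift23 A := by
  ext ⟨a, b, c⟩ ⟨d, e, f⟩
  simp [th1, lift23, Matrix.mul_apply, Fintype.sum_prod_type, mul_ite, ite_mul,
    Finset.sum_ite_eq, Finset.sum_ite_eq']

lemma th3_mul_left (A : Matrix (V × V) (V × V) k) (N : Matrix (V × V × V) (V × V × V) k) :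
    th3 (lift12 A * N) = lift12 A * th3 N := by
  ext ⟨a, b, c⟩ ⟨d, e, f⟩
  simp [th3, lift12, Matrix.mul_apply, Fintype.sum_prod_type, mul_ite, ite_mul,
    Finset.sum_ite_eq, Finset.sum_ite_eq']

lemma th3_mul_right (A : Matrix (V × V) (V × V) k) (N : Matrix (V × V × V) (V × V × V) k) :
    th3 (N * lift12 A) = th3 N * lift12 A := by
  ext ⟨a, b, c⟩ ⟨d, e, f⟩
  simp [th3, lift12, Matrix.mul_apply, Fintype.sum_prod_type, mul_ite, ite_mul,
    Finset.sum_ite_eq, Finset.sum_ite_eq']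

lemma th1_anti (X Y : Matrix (V × V) (V × V) k) :
    th1 (lift13 X * lift12 Y) = th1 (lift12 Y) * th1 (lift13 X) := by
  ext ⟨a, b, c⟩ ⟨d, e, f⟩
  simp [th1, lift12, lift13, Matrix.mul_apply, Fintype.sum_prod_type, mul_ite, ite_mul,
    Finset.sum_ite_eq, Finset.sum_ite_eq']
  exact Finset.sum_congr rfl fun _ _ => mul_comm _ _

lemma th3_anti (X Y : Matrix (V × V) (V × V) k) :
    th3 (lift23 X * lift13 Y) = th3 (lift13 Y) * th3 (lift23 X) := by
  ext ⟨a, b, c⟩ ⟨d, e, f⟩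
  simp [th3, lift23, lift13, Matrix.mul_apply, Fintype.sum_prod_type, mul_ite, ite_mul,
    Finset.sum_ite_eq, Finset.sum_ite_eq']
  exact Finset.sum_congr rfl fun _ _ => mul_comm _ _

end Aux

theorem mixed_pentagon_five
    {k V : Type*} [Field k] [Fintype V] [DecidableEq V]
    (S : Matrix (V × V) (V × V) k)
    (hSinv : IsUnit S) (hSt2inv : IsUnit (pt2 S))
    (hpent : lift12 S * lift13 S * lift23 S = lift23 S * lift12 S) :
    lift12 (pt1 S⁻¹) * lift13 Sᵀ * lift23 (pt2 S)⁻¹ = lift23 (pt2 S)⁻¹ * lift12 (pt1 S⁻¹) := by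
  have hSd : IsUnit S.det := (Matrix.isUnit_iff_isUnit_det S).mp hSinv
  have hTd : IsUnit (pt2 S).det := (Matrix.isUnit_iff_isUnit_det _).mp hSt2inv
  have hS1 : S * S⁻¹ = 1 := Matrix.mul_nonsing_inv S hSd
  have hS2 : S⁻¹ * S = 1 := Matrix.nonsing_inv_mul S hSd
  have hT1 : pt2 S * (pt2 S)⁻¹ = 1 := Matrix.mul_nonsing_inv _ hTd
  have hT2 : (pt2 S)⁻¹ * pt2 S = 1 := Matrix.nonsing_inv_mul _ hTd
  -- triple-level inverses
  have h12a : lift12 S * lift12 S⁻¹ = 1 := by rw [lift12_mul, hS1, lift12_one]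
  have h12b : lift12 S⁻¹ * lift12 S = 1 := by rw [lift12_mul, hS2, lift12_one]
  have h23a : lift23 (pt2 S) * lift23 (pt2 S)⁻¹ = 1 := by rw [lift23_mul, hT1, lift23_one]
  have h23b : lift23 (pt2 S)⁻¹ * lift23 (pt2 S) = 1 := by rw [lift23_mul, hT2, lift23_one]
  -- Step 1: G3 : S12 * (th3 S23 * th3 S13) = th3 S23 * S12
  have key : lift23 (pt2 S) * lift13 (pt2 S) = th3 (lift13 S * lift23 S) := by
    have h : th3 (lift23 (pt2 S) * lift13 (pt2 S)) = lift13 S * lift23 S := by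
      rw [th3_anti, th3_lift13, th3_lift23, pt2_pt2]
    rw [← h, th3_th3]
  have G3 : lift12 S * (lift23 (pt2 S) * lift13 (pt2 S)) = lift23 (pt2 S) * lift12 S := by
    rw [key, ← th3_mul_left, ← mul_assoc, hpent, th3_mul_right, th3_lift23]
  -- Step 2: G2 : th3 S23 * (th3 S13 * P) = P * th3 S23  where P = lift12 S⁻¹
  have G2 : lift23 (pt2 S) * (lift13 (pt2 S) * lift12 S⁻¹) = lift12 S⁻¹ * lift23 (pt2 S) := by
    have haux : lift12 S * (lift23 (pt2 S) * (lift13 (pt2 S) * lift12 S⁻¹)) =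
        lift12 S * (lift12 S⁻¹ * lift23 (pt2 S)) := by
      calc lift12 S * (lift23 (pt2 S) * (lift13 (pt2 S) * lift12 S⁻¹))
          = lift12 S * (lift23 (pt2 S) * lift13 (pt2 S)) * lift12 S⁻¹ := by
            simp only [mul_assoc]
        _ = lift23 (pt2 S) * lift12 S * lift12 S⁻¹ := by rw [G3]
        _ = lift23 (pt2 S) := by rw [mul_assoc, h12a, mul_one]
        _ = lift12 S * (lift12 S⁻¹ * lift23 (pt2 S)) := by rw [← mul_assoc, h12a, one_mul]
    calc lift23 (pt2 S) * (lift13 (pt2 S) * lift12 S⁻¹)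
        = lift12 S⁻¹ * (lift12 S * (lift23 (pt2 S) * (lift13 (pt2 S) * lift12 S⁻¹))) := by
          conv_rhs => rw [← mul_assoc, h12b, one_mul]
      _ = lift12 S⁻¹ * (lift12 S * (lift12 S⁻¹ * lift23 (pt2 S))) := by rw [haux]
      _ = lift12 S⁻¹ * lift23 (pt2 S) := by rw [← mul_assoc (lift12 S), h12a, one_mul]
  -- Step 3: apply θ₁
  have G1 : lift23 (pt2 S) * (lift12 (pt1 S⁻¹) * lift13 Sᵀ) =
      lift12 (pt1 S⁻¹) * lift23 (pt2 S) := by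
    have := congrArg th1 G2
    rw [th1_mul_left, th1_mul_right, th1_anti, th1_lift12, th1_lift13, pt1_pt2] at this
    exact this
  -- Step 4: conjugate by the inverse
  calc lift12 (pt1 S⁻¹) * lift13 Sᵀ * lift23 (pt2 S)⁻¹
      = lift23 (pt2 S)⁻¹ * (lift23 (pt2 S) * (lift12 (pt1 S⁻¹) * lift13 Sᵀ)) *
        lift23 (pt2 S)⁻¹ := by rw [← mul_assoc, h23b, one_mul]
    _ = lift23 (pt2 S)⁻¹ * (lift12 (pt1 S⁻¹) * lift23 (pt2 S)) * lift23 (pt2 S)⁻¹ := by rw [G1]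
    _ = lift23 (pt2 S)⁻¹ * lift12 (pt1 S⁻¹) := by
        rw [mul_assoc, mul_assoc, h23a, mul_one]
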